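/- Let U ⊆ ℂ^n be a connected open set and let φ_1, …, φ_d be holomorphic functions on U that are algebraically independent over the field of rational functions. Let W ⊆ ℂ^n × ℂ^d be a connected open set containing the graph {(s, φ_1(s), …, φ_d(s)) : s ∈ U}, and let Ψ be a Nash algebraic holomorphic function on W. If Ψ(s, φ_1(s), …, φ_d(s)) = 0 for all s ∈ U, then Ψ is identically zero on W. (This is the key vanishing lemma in the proof of Theorem 2.1(ii)–(iii): a Nash algebraic function vanishing along the graph of algebraically independent functions vanishes identically.) -/

import Mathlib

/-!
Write the polynomial relation `P(z, w, Ψ) = 0` as `Ψ ^ m · R(z, w, Ψ) = 0`, where `R(z, w, 0)` is a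
nonzero polynomial in `(z, w)`. By algebraic independence, `R(z, w, 0)` does not vanish at some
point `x₀ = (s₀, φ(s₀))` of the graph, where `Ψ(x₀) = 0`; by continuity `R(z, w, Ψ(z, w)) ≠ 0`
near `x₀`, so `Ψ` vanishes near `x₀`, hence on the connected set `W` by the identity theorem.
-/

/-- A holomorphic function `f` on an open subset `V ⊆ ℂ^a × ℂ^b` is *Nash algebraic* if there
is a nonzero polynomial `P` in the variables `(z₁, …, z_a, w₁, …, w_b, y)` with complex
coefficients such that `P(z, w, f (z, w)) = 0` for all `(z, w) ∈ V`. -/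
def NashAlgebraicOnPair {a b : ℕ} (f : ((Fin a → ℂ) × (Fin b → ℂ)) → ℂ)
    (V : Set ((Fin a → ℂ) × (Fin b → ℂ))) : Prop :=
  ∃ P : MvPolynomial ((Fin a ⊕ Fin b) ⊕ Unit) ℂ, P ≠ 0 ∧
    ∀ zw ∈ V, MvPolynomial.eval (Sum.elim (Sum.elim zw.1 zw.2) fun _ => f zw) P = 0

open Filter Metric Polynomial Set Topology

section IdentityTheorem

variable {E F : Type*} [NormedAddCommGroup E] [NormedSpace ℂ E]
  [NormedAddCommGroup F] [NormedSpace ℂ F] [CompleteSpace F]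

/-- Restricted to each complex line through `y`, `f` is holomorphic on a disc, hence analytic. -/
theorem DifferentiableOn.eqOn_zero_ball_of_eventuallyEq_zero {f : E → F} {y : E} {ρ : ℝ}
    (hf : DifferentiableOn ℂ f (ball y ρ)) (h₀ : f =ᶠ[𝓝 y] 0) : EqOn f 0 (ball y ρ) := by
  intro z hz
  set L : ℂ → E := fun t => y + t • (z - y)
  have hL : Differentiable ℂ L := by fun_prop
  set D : Set ℂ := (fun t : ℂ => t • (z - y)) ⁻¹' ball 0 ρ
  have hLD : MapsTo L D (ball y ρ) := fun t ht => by
    simpa [L, D, mem_ball_iff_norm] using ht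
  have hDo : IsOpen D := isOpen_ball.preimage (by fun_prop)
  have hDc : IsPreconnected D := Convex.isPreconnected <|
    (convex_ball 0 ρ).is_linear_preimage ⟨fun s t => add_smul s t _, fun c t => smul_assoc c t _⟩
  have hfL : AnalyticOnNhd ℂ (f ∘ L) D :=
    (hf.comp hL.differentiableOn hLD).analyticOnNhd hDo
  have h0D : (0 : ℂ) ∈ D := by simpa [D] using pos_of_mem_ball hz
  have h1D : (1 : ℂ) ∈ D := by simpa [D] using mem_ball_iff_norm.1 hz
  have hfL₀ : f ∘ L =ᶠ[𝓝 0] 0 := by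
    have : Tendsto L (𝓝 0) (𝓝 y) := by simpa [L] using hL.continuous.tendsto 0
    exact h₀.comp_tendsto this
  simpa [L] using hfL.eqOn_zero_of_preconnected_of_eventuallyEq_zero hDc h0D hfL₀ h1D

/-- The set where `f` vanishes locally is open, and relatively closed in `W` by the ball case. -/
theorem DifferentiableOn.eqOn_zero_of_preconnected_of_eventuallyEq_zero {f : E → F} {W : Set E}
    (hf : DifferentiableOn ℂ f W) (hWo : IsOpen W) (hWc : IsPreconnected W) {x₀ : E}
    (hx₀ : x₀ ∈ W) (h₀ : f =ᶠ[𝓝 x₀] 0) : EqOn f 0 W := by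
  set u : Set E := {x | f =ᶠ[𝓝 x] 0}
  have hWu : W ⊆ u := by
    refine hWc.subset_of_closure_inter_subset isOpen_setOfPred_eventually_nhds ⟨x₀, hx₀, h₀⟩ ?_
    rintro x ⟨hxu, hxW⟩
    obtain ⟨ρ, hρ, hxρ⟩ := Metric.isOpen_iff.1 hWo x hxW
    obtain ⟨y, hyx, hyu⟩ := mem_closure_iff.1 hxu _ isOpen_ball (mem_ball_self (half_pos hρ))
    have hyρ : ball y (ρ / 2) ⊆ W :=
      (ball_subset_ball' (by linarith [mem_ball.1 hyx])).trans hxρ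
    have hxy : x ∈ ball y (ρ / 2) := mem_ball_comm.1 hyx
    exact eventually_of_mem (isOpen_ball.mem_nhds hxy)
      ((hf.mono hyρ).eqOn_zero_ball_of_eventuallyEq_zero hyu)
  exact fun x hx => (hWu hx).self_of_nhds

end IdentityTheorem

section PolynomialRelations

variable {σ R : Type*}

theorem Polynomial.continuous_eval_map_mvPolynomialEval [CommSemiring R] [TopologicalSpace R]
    [IsTopologicalSemiring R] (p : (MvPolynomial σ R)[X]) :
    Continuous fun vy : (σ → R) × R => (p.map (MvPolynomial.eval vy.1)).eval vy.2 := by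
  have hp (vy : (σ → R) × R) := MvPolynomial.optionEquivLeft_elim_eval R σ vy.1 vy.2
    ((MvPolynomial.optionEquivLeft R σ).symm p)
  simp only [AlgEquiv.apply_symm_apply] at hp
  simp only [← hp]
  refine (MvPolynomial.continuous_eval _).comp (continuous_pi ?_)
  rintro (_ | i) <;> simp only [Option.elim] <;> fun_prop

theorem eventually_eq_zero_of_eval_X_pow_mul_eq_zero [CommRing R] [IsDomain R]
    [TopologicalSpace R] [IsTopologicalRing R] [T1Space R] {α : Type*} [TopologicalSpace α]
    {v : α → σ → R} {f : α → R} {x₀ : α} (hv : ContinuousAt v x₀) (hf : ContinuousAt f x₀)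
    (hfx₀ : f x₀ = 0) {p : (MvPolynomial σ R)[X]} (hp : MvPolynomial.eval (v x₀) (p.coeff 0) ≠ 0)
    (m : ℕ) (h : ∀ᶠ x in 𝓝 x₀, ((X ^ m * p).map (MvPolynomial.eval (v x))).eval (f x) = 0) :
    ∀ᶠ x in 𝓝 x₀, f x = 0 := by
  set g : α → R := fun x => (p.map (MvPolynomial.eval (v x))).eval (f x)
  have hg : ContinuousAt g x₀ :=
    (p.continuous_eval_map_mvPolynomialEval.continuousAt).comp (f := fun x => (v x, f x))
      (hv.prodMk hf)
  have hgx₀ : g x₀ ≠ 0 := by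
    simpa [g, hfx₀, ← coeff_zero_eq_eval_zero, coeff_map] using hp
  filter_upwards [h, hg.eventually_ne hgx₀] with x hx hgx
  simp only [Polynomial.map_mul, Polynomial.map_pow, map_X, eval_mul, eval_pow, eval_X] at hx
  exact eq_zero_of_pow_eq_zero ((mul_eq_zero.1 hx).resolve_right hgx)

end PolynomialRelations

theorem NashAlgebraicOnPair.exists_polynomial {a b : ℕ} {f : ((Fin a → ℂ) × (Fin b → ℂ)) → ℂ}
    {V : Set ((Fin a → ℂ) × (Fin b → ℂ))} (hf : NashAlgebraicOnPair f V) :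
    ∃ Q : (MvPolynomial (Fin a ⊕ Fin b) ℂ)[X], Q ≠ 0 ∧
      ∀ zw ∈ V, (Q.map (MvPolynomial.eval (Sum.elim zw.1 zw.2))).eval (f zw) = 0 := by
  obtain ⟨P, hP0, hPf⟩ := hf
  set e := (MvPolynomial.renameEquiv ℂ (Equiv.optionEquivSumPUnit (Fin a ⊕ Fin b)).symm).trans
    (MvPolynomial.optionEquivLeft ℂ (Fin a ⊕ Fin b))
  refine ⟨e P, (map_ne_zero_iff _ e.injective).2 hP0, fun zw hzw => ?_⟩
  rw [← hPf zw hzw, AlgEquiv.trans_apply, ← MvPolynomial.optionEquivLeft_elim_eval,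
    MvPolynomial.renameEquiv_apply, MvPolynomial.eval_rename]
  congr 2
  funext x
  rcases x with (_ | _) | _ <;> rfl

theorem nashAlgebraic_vanishing_on_graph_general
    {n d : ℕ} (U : Set (Fin n → ℂ))
    (φ : Fin d → (Fin n → ℂ) → ℂ)
    (hindep : ∀ A : MvPolynomial (Fin n ⊕ Fin d) ℂ, A ≠ 0 →
      ¬ ∀ s ∈ U, MvPolynomial.eval (Sum.elim s fun i => φ i s) A = 0)
    (W : Set ((Fin n → ℂ) × (Fin d → ℂ))) (hWo : IsOpen W) (hWc : IsConnected W)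
    (hgraph : ∀ s ∈ U, (s, fun i => φ i s) ∈ W)
    (Ψ : ((Fin n → ℂ) × (Fin d → ℂ)) → ℂ)
    (hΨ : DifferentiableOn ℂ Ψ W) (hΨn : NashAlgebraicOnPair Ψ W)
    (hvan : ∀ s ∈ U, Ψ (s, fun i => φ i s) = 0) :
    ∀ zw ∈ W, Ψ zw = 0 := by
  obtain ⟨Q, hQ0, hQΨ⟩ := hΨn.exists_polynomial
  obtain ⟨R, hQR, hXR⟩ := Q.exists_eq_pow_rootMultiplicity_mul_and_not_dvd hQ0 0
  rw [C_0, sub_zero] at hQR hXR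
  obtain ⟨s₀, hs₀, hRs₀⟩ :
      ∃ s ∈ U, MvPolynomial.eval (Sum.elim s fun i => φ i s) (R.coeff 0) ≠ 0 := by
    simpa using hindep _ (mt X_dvd_iff.2 hXR)
  have hx₀ : (s₀, fun i => φ i s₀) ∈ W := hgraph s₀ hs₀
  have hΨ₀ : Ψ =ᶠ[𝓝 (s₀, fun i => φ i s₀)] 0 :=
    eventually_eq_zero_of_eval_X_pow_mul_eq_zero
      Homeomorph.sumArrowHomeomorphProdArrow.symm.continuous.continuousAt
      (hΨ.continuousOn.continuousAt (hWo.mem_nhds hx₀)) (hvan s₀ hs₀) hRs₀ _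
      (eventually_of_mem (hWo.mem_nhds hx₀) fun zw hzw => hQR ▸ hQΨ zw hzw)
  exact hΨ.eqOn_zero_of_preconnected_of_eventuallyEq_zero hWo hWc.isPreconnected hx₀ hΨ₀

/-- Key vanishing lemma in the proof of Theorem 2.1(ii)–(iii): if `φ₁, …, φ_d` are holomorphic
functions on a connected open set `U ⊆ ℂ^n`, algebraically independent over the rational
functions, and `Ψ` is a Nash algebraic holomorphic function on a connected open set
`W ⊆ ℂ^n × ℂ^d` containing the graph `{(s, φ(s)) : s ∈ U}` which vanishes along this graph,
then `Ψ ≡ 0` on `W`. -/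
theorem nashAlgebraic_vanishing_on_graph
    {n d : ℕ} (U : Set (Fin n → ℂ)) (hUo : IsOpen U) (hUc : IsConnected U)
    (φ : Fin d → (Fin n → ℂ) → ℂ) (hφ : ∀ i, DifferentiableOn ℂ (φ i) U)
    (hindep : ∀ A : MvPolynomial (Fin n ⊕ Fin d) ℂ, A ≠ 0 →
      ¬ ∀ s ∈ U, MvPolynomial.eval (Sum.elim s fun i => φ i s) A = 0)
    (W : Set ((Fin n → ℂ) × (Fin d → ℂ))) (hWo : IsOpen W) (hWc : IsConnected W)
    (hgraph : ∀ s ∈ U, (s, fun i => φ i s) ∈ W)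
    (Ψ : ((Fin n → ℂ) × (Fin d → ℂ)) → ℂ)
    (hΨ : DifferentiableOn ℂ Ψ W) (hΨn : NashAlgebraicOnPair Ψ W)
    (hvan : ∀ s ∈ U, Ψ (s, fun i => φ i s) = 0) :
    ∀ zw ∈ W, Ψ zw = 0 :=
  nashAlgebraic_vanishing_on_graph_general U φ hindep W hWo hWc hgraph Ψ hΨ hΨn hvan
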